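/- arXiv:2506.01355 — 4 statements merged into one kernel-verified Lean document; each statement's English description precedes it below -/
import Mathlib

section
/- Let ϖ be a real number with 0 < ϖ < π. Then the limit as M → ∞ (over natural numbers M ≥ 2) of [ Σ_{m=1}^{M−1} (2/(π ϖ m)) · cos²(ϖ m − π/4) − (1/(π ϖ)) · ln(M − 1) ] exists and equals ε/(π ϖ) + 1/(2ϖ) − 1/π, where ε is the Euler–Mascheroni constant. -/
open Filter Real

private lemma sum_Icc_one_eq_range (f : ℕ → ℝ) (N : ℕ) :
    ∑ m ∈ Finset.Icc 1 N, f m = ∑ i ∈ Finset.range N, f (i + 1) := by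
  induction N with
  | zero => simp
  | succ n ih =>
      rw [Finset.sum_range_succ, ← ih, Finset.sum_Icc_succ_top (by omega)]

private lemma sawtooth {θ : ℝ} (h0 : 0 < θ) (h2 : θ < 2 * Real.pi) :
    Tendsto (fun N : ℕ => ∑ i ∈ Finset.range N, Real.sin (θ * ((i : ℝ) + 1)) / ((i : ℝ) + 1))
      atTop (nhds ((Real.pi - θ) / 2)) := by
  have hπ := Real.pi_pos
  set z : ℂ := Complex.exp (θ * Complex.I) with hzdef
  have hz1 : z ≠ 1 := by
    rw [hzdef, Ne, Complex.exp_eq_one_iff]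
    rintro ⟨n, hn⟩
    have him := congrArg Complex.im hn
    simp [Complex.mul_im] at him
    rcases le_or_gt n 0 with h | h
    · have : (n : ℝ) ≤ 0 := by exact_mod_cast h
      nlinarith
    · have : (1 : ℝ) ≤ (n : ℝ) := by exact_mod_cast h
      nlinarith
  have hzabs : ‖z‖ = 1 := Complex.norm_exp_ofReal_mul_I θ
  have hzsub : 0 < ‖z - 1‖ := by
    rw [norm_pos_iff]
    exact sub_ne_zero.mpr hz1
  set K : ℝ := 2 / ‖z - 1‖ with hKdef
  have hK0 : 0 ≤ K := by positivity
  have hzpow : ∀ n : ℕ, z ^ n = Complex.exp ((θ * n : ℝ) * Complex.I) := by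
    intro n
    rw [hzdef, ← Complex.exp_nat_mul]
    congr 1
    push_cast
    ring
  have hzpow_im : ∀ n : ℕ, (z ^ n).im = Real.sin (θ * n) := fun n => by
    rw [hzpow n, Complex.exp_ofReal_mul_I_im]
  set G : ℕ → ℝ := fun k => ∑ j ∈ Finset.range k, Real.sin (θ * ((j : ℝ) + 1)) with hGdef
  have hGim : ∀ k, G k = (∑ j ∈ Finset.range k, z ^ (j + 1)).im := by
    intro k
    rw [hGdef, Complex.im_sum]
    refine Finset.sum_congr rfl fun j _ => ?_
    rw [hzpow_im (j + 1)]
    push_cast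
    ring_nf
  have hGbound : ∀ k, |G k| ≤ K := by
    intro k
    rw [hGim]
    refine (Complex.abs_im_le_norm _).trans ?_
    have hgeom : (∑ j ∈ Finset.range k, z ^ (j + 1)) = z * ((z ^ k - 1) / (z - 1)) := by
      rw [← geom_sum_eq hz1, Finset.mul_sum]
      exact Finset.sum_congr rfl fun j _ => pow_succ' z j
    rw [hgeom, norm_mul, norm_div, hzabs, one_mul, hKdef]
    gcongr
    calc ‖z ^ k - 1‖ = ‖z ^ k - 1‖ := rfl
      _ ≤ ‖z ^ k‖ + ‖(1 : ℂ)‖ := norm_sub_le _ _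
      _ = 2 := by
          rw [norm_pow, hzabs]
          norm_num
  -- the absolutely convergent part
  set g : ℕ → ℝ := fun i => (1 / ((i : ℝ) + 1) - 1 / ((i : ℝ) + 2)) * G (i + 1) with hgdef
  have hgsum : Summable g := by
    have hmaj : Summable (fun i : ℕ => K * (1 / ((i : ℝ) + 1) ^ 2)) := by
      apply Summable.mul_left
      have h1 : Summable (fun n : ℕ => 1 / (n : ℝ) ^ 2) :=
        Real.summable_one_div_nat_pow.mpr one_lt_two
      have := (summable_nat_add_iff 1).mpr h1
      refine this.congr fun n => ?_
      push_cast
      ring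
    refine Summable.of_norm_bounded hmaj fun i => ?_
    rw [hgdef]
    have hd : (0 : ℝ) < (i : ℝ) + 1 := by positivity
    have hd2 : (0 : ℝ) < (i : ℝ) + 2 := by positivity
    have hnn : (0 : ℝ) ≤ 1 / ((i : ℝ) + 1) - 1 / ((i : ℝ) + 2) := by
      rw [sub_nonneg]
      gcongr
      linarith
    rw [norm_mul, Real.norm_eq_abs, Real.norm_eq_abs, abs_of_nonneg hnn]
    calc (1 / ((i : ℝ) + 1) - 1 / ((i : ℝ) + 2)) * |G (i + 1)|
        ≤ (1 / ((i : ℝ) + 1) ^ 2) * K := by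
          apply mul_le_mul _ (hGbound _) (abs_nonneg _) (by positivity)
          rw [div_sub_div _ _ hd.ne' hd2.ne']
          rw [div_le_div_iff₀ (by positivity) (by positivity)]
          ring_nf
          nlinarith
      _ = K * (1 / ((i : ℝ) + 1) ^ 2) := by ring
  set T : ℝ := ∑' i, g i with hTdef
  -- summation by parts identity
  have key : ∀ n : ℕ,
      ∑ i ∈ Finset.range n, Real.sin (θ * ((i : ℝ) + 1)) / ((i : ℝ) + 1)
        = (1 / (((n - 1 : ℕ) : ℝ) + 1)) * G n + ∑ i ∈ Finset.range (n - 1), g i := by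
    intro n
    have hparts := Finset.sum_range_by_parts (fun i : ℕ => 1 / ((i : ℝ) + 1))
      (fun i : ℕ => Real.sin (θ * ((i : ℝ) + 1))) n
    simp only [smul_eq_mul] at hparts
    have hL : ∑ i ∈ Finset.range n, (1 / ((i : ℝ) + 1)) * Real.sin (θ * ((i : ℝ) + 1))
        = ∑ i ∈ Finset.range n, Real.sin (θ * ((i : ℝ) + 1)) / ((i : ℝ) + 1) := by
      refine Finset.sum_congr rfl fun i _ => ?_
      ring
    rw [hL] at hparts
    rw [hparts, sub_eq_add_neg, ← Finset.sum_neg_distrib]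
    congr 1
    refine Finset.sum_congr rfl fun i _ => ?_
    simp only [hgdef]
    push_cast
    ring
  -- limits of the two pieces
  have hterm1 : Tendsto (fun n : ℕ => (1 / (((n - 1 : ℕ) : ℝ) + 1)) * G n) atTop (nhds 0) := by
    apply squeeze_zero_norm' (a := fun n : ℕ => (1 / (((n - 1 : ℕ) : ℝ) + 1)) * K)
    · filter_upwards with n
      rw [norm_mul, Real.norm_eq_abs, Real.norm_eq_abs,
        abs_of_pos (by positivity : (0:ℝ) < 1 / (((n - 1 : ℕ) : ℝ) + 1))]
      gcongr
      exact hGbound n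
    · have h1 : Tendsto (fun m : ℕ => 1 / ((m : ℝ) + 1)) atTop (nhds 0) :=
        tendsto_one_div_add_atTop_nhds_zero_nat
      have h2 := (h1.comp (tendsto_sub_atTop_nat 1)).mul_const K
      simpa using h2
  have hterm2 : Tendsto (fun n : ℕ => ∑ i ∈ Finset.range (n - 1), g i) atTop (nhds T) :=
    (hgsum.hasSum.tendsto_sum_nat).comp (tendsto_sub_atTop_nat 1)
  have hS : Tendsto
      (fun n : ℕ => ∑ i ∈ Finset.range n, Real.sin (θ * ((i : ℝ) + 1)) / ((i : ℝ) + 1))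
      atTop (nhds T) := by
    have h := hterm1.add hterm2
    rw [zero_add] at h
    exact h.congr fun n => (key n).symm
  -- Abel's limit theorem to identify T
  set F : ℕ → ℝ := fun n => Real.sin (θ * n) / n with hFdef
  have hFpartial : Tendsto (fun n => ∑ i ∈ Finset.range n, F i) atTop (nhds T) := by
    apply (hS.comp (tendsto_sub_atTop_nat 1)).congr'
    filter_upwards [eventually_ge_atTop 1] with n hn
    obtain ⟨m, rfl⟩ : ∃ m, n = m + 1 := ⟨n - 1, by omega⟩
    simp only [Function.comp_apply, Nat.add_sub_cancel]
    rw [Finset.sum_range_succ']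
    have hF0 : F 0 = 0 := by simp [hFdef]
    rw [hF0, add_zero]
    refine Finset.sum_congr rfl fun i _ => ?_
    simp only [hFdef]
    push_cast
    ring_nf
  have habel := Real.tendsto_tsum_powerSeries_nhdsWithin_lt hFpartial
  have hcos1 : Real.cos θ < 1 := by
    refine lt_of_le_of_ne (Real.cos_le_one θ) fun h => ?_
    rw [Real.cos_eq_one_iff] at h
    obtain ⟨n, hn⟩ := h
    rcases le_or_gt n 0 with hn0 | hn0
    · have : (n : ℝ) ≤ 0 := by exact_mod_cast hn0
      nlinarith
    · have : (1 : ℝ) ≤ (n : ℝ) := by exact_mod_cast hn0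
      nlinarith
  have hre : (0:ℝ) < ((1 : ℂ) - z).re := by
    rw [Complex.sub_re, Complex.one_re, hzdef, Complex.exp_ofReal_mul_I_re]
    linarith
  have harg : ((1 : ℂ) - z).arg = (θ - Real.pi) / 2 := by
    have hr : 0 < 2 * Real.sin (θ / 2) := by
      have := Real.sin_pos_of_pos_of_lt_pi (x := θ / 2) (by linarith) (by linarith)
      linarith
    have hmem : (θ - Real.pi) / 2 ∈ Set.Ioc (-Real.pi) Real.pi := ⟨by linarith, by linarith⟩
    have hfac : (1 : ℂ) - z
        = ↑(2 * Real.sin (θ / 2)) * (Complex.cos ↑((θ - Real.pi) / 2)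
            + Complex.sin ↑((θ - Real.pi) / 2) * Complex.I) := by
      rw [← Complex.ofReal_cos, ← Complex.ofReal_sin]
      have hhalf : (θ - Real.pi) / 2 = θ / 2 - Real.pi / 2 := by ring
      have hc : Real.cos ((θ - Real.pi) / 2) = Real.sin (θ / 2) := by
        rw [hhalf, Real.cos_sub_pi_div_two]
      have hs : Real.sin ((θ - Real.pi) / 2) = -Real.cos (θ / 2) := by
        rw [hhalf, Real.sin_sub_pi_div_two]
      have h1 := Real.sin_sq_add_cos_sq (θ / 2)
      have h2 : Real.cos θ = 2 * Real.cos (θ / 2) ^ 2 - 1 := by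
        have := Real.cos_two_mul (θ / 2)
        rwa [show 2 * (θ / 2) = θ by ring] at this
      have h3 : Real.sin θ = 2 * Real.sin (θ / 2) * Real.cos (θ / 2) := by
        have := Real.sin_two_mul (θ / 2)
        rwa [show 2 * (θ / 2) = θ by ring] at this
      apply Complex.ext
      · simp only [Complex.sub_re, Complex.one_re, hzdef, Complex.exp_ofReal_mul_I_re,
          Complex.mul_re, Complex.add_re, Complex.ofReal_re, Complex.ofReal_im,
          Complex.mul_im, Complex.add_im, Complex.I_re, Complex.I_im]
        rw [hc]
        nlinarith
      · simp only [Complex.sub_im, Complex.one_im, hzdef, Complex.exp_ofReal_mul_I_im,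
          Complex.mul_re, Complex.add_re, Complex.ofReal_re, Complex.ofReal_im,
          Complex.mul_im, Complex.add_im, Complex.I_re, Complex.I_im]
        rw [hs]
        nlinarith
    rw [hfac]
    exact Complex.arg_mul_cos_add_sin_mul_I hr hmem
  have hlogim : (-(Complex.log ((1 : ℂ) - z))).im = (Real.pi - θ) / 2 := by
    rw [Complex.neg_im, Complex.log_im, harg]
    ring
  have hcont : Tendsto (fun x : ℝ => (-(Complex.log (1 - ↑x * z))).im)
      (nhdsWithin 1 (Set.Iio 1)) (nhds ((Real.pi - θ) / 2)) := by
    have hten : Tendsto (fun x : ℝ => (1:ℂ) - ↑x * z) (nhds 1)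
        (nhds ((1:ℂ) - ↑(1:ℝ) * z)) := by
      have : Continuous (fun x : ℝ => (1:ℂ) - ↑x * z) := by fun_prop
      simpa using this.tendsto 1
    have hlogten : Tendsto Complex.log (nhds ((1:ℂ) - ↑(1:ℝ) * z))
        (nhds (Complex.log ((1:ℂ) - ↑(1:ℝ) * z))) := by
      apply _root_.continuousAt_clog
      rw [Complex.mem_slitPlane_iff]
      left
      simpa using hre
    have hca : Tendsto (fun x : ℝ => (-(Complex.log (1 - ↑x * z))).im) (nhds 1)
        (nhds ((-(Complex.log ((1:ℂ) - ↑(1:ℝ) * z))).im)) := by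
      exact (Complex.continuous_im.tendsto _).comp ((hlogten.comp hten).neg)
    have hval : (-(Complex.log (1 - ↑(1:ℝ) * z))).im = (Real.pi - θ) / 2 := by
      rw [show ((1:ℝ):ℂ) * z = z by simp, show ((1:ℂ) - z) = (1 - z) by ring, hlogim]
    rw [← hval]
    exact hca.mono_left nhdsWithin_le_nhds
  have heq : (fun x : ℝ => ∑' n, F n * x ^ n)
      =ᶠ[nhdsWithin 1 (Set.Iio 1)] (fun x : ℝ => (-(Complex.log (1 - ↑x * z))).im) := by
    filter_upwards [Ioo_mem_nhdsLT_of_mem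
      (show (1:ℝ) ∈ Set.Ioc (-1:ℝ) 1 from ⟨by norm_num, le_refl 1⟩)] with x hx
    have hxz : ‖(x : ℂ) * z‖ < 1 := by
      rw [norm_mul, Complex.norm_real, hzabs, mul_one]
      exact abs_lt.mpr ⟨hx.1, hx.2⟩
    have hsum := Complex.hasSum_im (Complex.hasSum_taylorSeries_neg_log hxz)
    have hfun : ∀ n : ℕ, (((x : ℂ) * z) ^ n / n).im = F n * x ^ n := by
      intro n
      have hh : ((x : ℂ) * z) ^ n / n = ↑(x ^ n / (n : ℝ)) * z ^ n := by
        push_cast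
        ring
      rw [hh, Complex.im_ofReal_mul, hzpow_im n]
      simp only [hFdef]
      ring
    simp only [hfun] at hsum
    exact hsum.tsum_eq
  have hTval : T = (Real.pi - θ) / 2 := tendsto_nhds_unique (habel.congr' heq) hcont
  rw [← hTval]
  exact hS


/-- for `0 < ϖ < π`, as `M → ∞` (over the naturals),
`Σ_{m=1}^{M-1} (2/(π ϖ m)) cos²(ϖ m - π/4) - (1/(π ϖ)) ln(M - 1)`
converges to `ε/(π ϖ) + 1/(2 ϖ) - 1/π`, where `ε` is the Euler–Mascheroni
constant. -/
theorem asymptotic_cos_sq_sum (ϖ : ℝ) (h₀ : 0 < ϖ) (h₁ : ϖ < Real.pi) :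
    Tendsto
      (fun M : ℕ =>
        (∑ m ∈ Finset.Icc 1 (M - 1),
            (2 / (Real.pi * ϖ * m)) * Real.cos (ϖ * m - Real.pi / 4) ^ 2)
          - (1 / (Real.pi * ϖ)) * Real.log ((M : ℝ) - 1))
      atTop
      (nhds (Real.eulerMascheroniConstant / (Real.pi * ϖ)
        + 1 / (2 * ϖ) - 1 / Real.pi)) := by
  have hπ := Real.pi_pos
  have hsaw := sawtooth (θ := 2 * ϖ) (by linarith) (by linarith)
  have hharm := Real.tendsto_harmonic_sub_log
  have hcomb := (hharm.add hsaw).const_mul (1 / (Real.pi * ϖ))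
  have hconst : (1 / (Real.pi * ϖ)) * (Real.eulerMascheroniConstant + (Real.pi - 2 * ϖ) / 2)
      = Real.eulerMascheroniConstant / (Real.pi * ϖ) + 1 / (2 * ϖ) - 1 / Real.pi := by
    field_simp
    ring
  rw [← hconst]
  refine Tendsto.congr' ?_ (hcomb.comp (tendsto_sub_atTop_nat 1))
  filter_upwards [eventually_ge_atTop 2] with M hM
  simp only [Function.comp_apply]
  set N : ℕ := M - 1 with hNdef
  have hN1 : 1 ≤ N := by omega
  have hMN : (M : ℝ) - 1 = (N : ℝ) := by
    rw [hNdef]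
    push_cast [Nat.cast_sub (by omega : 1 ≤ M)]
    ring
  have hterm : ∀ m ∈ Finset.Icc 1 N,
      (2 / (Real.pi * ϖ * m)) * Real.cos (ϖ * m - Real.pi / 4) ^ 2
        = (1 / (Real.pi * ϖ)) * (((m : ℝ))⁻¹ + Real.sin (2 * ϖ * m) / m) := by
    intro m hm
    have hm1 : 1 ≤ m := (Finset.mem_Icc.mp hm).1
    have hm0 : (0 : ℝ) < m := by exact_mod_cast hm1
    rw [Real.cos_sq, show 2 * (ϖ * m - Real.pi / 4) = 2 * ϖ * m - Real.pi / 2 by ring,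
      Real.cos_sub_pi_div_two]
    field_simp
  rw [Finset.sum_congr rfl hterm, ← Finset.mul_sum, Finset.sum_add_distrib]
  have hharmN : ∑ m ∈ Finset.Icc 1 N, ((m : ℝ))⁻¹ = ((harmonic N : ℚ) : ℝ) := by
    rw [harmonic_eq_sum_Icc]
    push_cast
    rfl
  have hsinN : ∑ m ∈ Finset.Icc 1 N, Real.sin (2 * ϖ * m) / m
      = ∑ i ∈ Finset.range N, Real.sin (2 * ϖ * ((i : ℝ) + 1)) / ((i : ℝ) + 1) := by
    rw [sum_Icc_one_eq_range (fun m : ℕ => Real.sin (2 * ϖ * m) / m) N]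
    refine Finset.sum_congr rfl fun i _ => ?_
    push_cast
    ring_nf
  rw [hharmN, hsinN, hMN]
  ring
end

section
/- Fix real numbers S > 0 and ϖ > 0, and define RT(M) = ((M − 1)/(M − 2)) · (1 + ζ(M)·S)/(1 + S) for natural numbers M ≥ 3, where ζ(M) = ζ_even(M) if M is even and ζ(M) = ζ_odd(M) if M is odd. Then lim_{M→∞} RT(M) · (π ϖ)/(2 · ln M) = S/(1 + S). (In the high-SINR regime S → ∞ this factor S/(1+S) tends to 1, recovering the paper's claim that the SINR ratio of the MRC receiver between uncorrelated and correlated fading approaches (2 ln M)/(π ϖ), i.e. that the EAR difference approaches log₂((2 ln M)/(π ϖ)).) -/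
/-! Writing `g(M)` for `M/2 - 1` (even `M`) or `⌈M/2⌉ - 1` (odd `M`), `ζ(M)` is
`(2/(πϖ)) log g(M)` plus a convergent term, and `log g(M) / log M → 1` because `g(M)` lies between
affine functions of `M` of slope `1/2`. Hence `ζ(M) πϖ / (2 log M) → 1`, and in
`RT(M) πϖ / (2 log M) = ((M-1)/(M-2)) (πϖ/(2 log M) + S ζ(M) πϖ/(2 log M)) / (1+S)`
the three factors tend to `1`, `0` and `1`. -/

open Filter Real

/-- `ζ_odd` of equation (37). -/
noncomputable def zetaOdd (ϖ : ℝ) (M : ℕ) : ℝ :=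
  1 + (2 / (Real.pi * ϖ)) *
      (Real.eulerMascheroniConstant + Real.log ((⌈(M : ℝ) / 2⌉ : ℝ) - 1))
    + (1 / ϖ - 2 / Real.pi)

/-- `ζ_even` of equation (38). -/
noncomputable def zetaEven (ϖ : ℝ) (M : ℕ) : ℝ :=
  1 + (2 / (Real.pi * ϖ)) *
      (Real.eulerMascheroniConstant + Real.log ((M : ℝ) / 2 - 1))
    + (1 / ϖ - 2 / Real.pi)
    + (4 / (Real.pi * ϖ)) * ((1 + Real.sin (ϖ * M)) / M)

/-- `ζ(M)`: `ζ_even` for even `M`, `ζ_odd` for odd `M`. -/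
noncomputable def zeta (ϖ : ℝ) (M : ℕ) : ℝ :=
  if Even M then zetaEven ϖ M else zetaOdd ϖ M

open Topology

lemma Real.tendsto_log_mul_add_div_log {a : ℝ} (ha : 0 < a) (b : ℝ) :
    Tendsto (fun x : ℝ => log (a * x + b) / log x) atTop (𝓝 1) := by
  have hlin : Tendsto (fun x : ℝ => a + b / x) atTop (𝓝 a) := by
    simpa using (tendsto_id.const_div_atTop b).const_add a
  have : Tendsto (fun x : ℝ => 1 + log (a + b / x) / log x) atTop (𝓝 (1 + 0)) :=
    tendsto_const_nhds.add ((hlin.log ha.ne').div_atTop tendsto_log_atTop)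
  rw [add_zero] at this
  refine this.congr' ?_
  filter_upwards [eventually_gt_atTop 1, hlin.eventually_const_lt ha] with x hx hab
  have hx0 : x ≠ 0 := by positivity
  rw [show a * x + b = x * (a + b / x) by field_simp, log_mul hx0 hab.ne', add_div,
    div_self (log_pos hx).ne']

lemma tendsto_log_ceil_half_sub_one_div_log :
    Tendsto (fun x : ℝ => log ((⌈x / 2⌉ : ℝ) - 1) / log x) atTop (𝓝 1) := by
  have hceil (x : ℝ) : x / 2 ≤ ⌈x / 2⌉ ∧ (⌈x / 2⌉ : ℝ) < x / 2 + 1 :=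
    ⟨Int.le_ceil _, Int.ceil_lt_add_one _⟩
  refine tendsto_of_tendsto_of_tendsto_of_le_of_le'
    (Real.tendsto_log_mul_add_div_log one_half_pos (-1))
    (Real.tendsto_log_mul_add_div_log one_half_pos 0) ?_ ?_ <;>
  filter_upwards [eventually_gt_atTop 4] with x hx <;>
  have := log_pos (by linarith : 1 < x) <;>
  gcongr <;>
  linarith [hceil x]

lemma tendsto_sub_one_div_sub_two : Tendsto (fun x : ℝ => (x - 1) / (x - 2)) atTop (𝓝 1) := by
  have : Tendsto (fun x : ℝ => 1 + (x - 2)⁻¹) atTop (𝓝 (1 + 0)) :=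
    (tendsto_atTop_add_const_right _ _ tendsto_id).inv_tendsto_atTop.const_add 1
  rw [add_zero] at this
  refine this.congr' ?_
  filter_upwards [eventually_gt_atTop 2] with x hx
  field_simp [(by linarith : x - 2 ≠ 0)]
  ring

lemma tendsto_add_mul_div_mul_of_div_tendsto_one {α : Type*} {l : Filter α} {e w v : α → ℝ}
    {a c : ℝ} (hc : c ≠ 0) (he : Tendsto e l (𝓝 a)) (hv : Tendsto v l atTop)
    (hwv : Tendsto (fun x => w x / v x) l (𝓝 1)) :
    Tendsto (fun x => (e x + c * w x) / (c * v x)) l (𝓝 1) := by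
  have : Tendsto (fun x => e x / c / v x + w x / v x) l (𝓝 (0 + 1)) :=
    (he.div_const c |>.div_atTop hv).add hwv
  rw [zero_add] at this
  refine this.congr fun x => ?_
  field_simp

lemma tendsto_one_add_sin_mul_div_natCast (ϖ : ℝ) :
    Tendsto (fun M : ℕ => (1 + sin (ϖ * M)) / M) atTop (𝓝 0) := by
  have hbdd : IsBoundedUnder (· ≤ ·) atTop fun M : ℕ => ‖1 + sin (ϖ * M)‖ :=
    isBoundedUnder_of ⟨2, fun M => by
      rw [Real.norm_eq_abs, abs_le]
      constructor <;> linarith [neg_one_le_sin (ϖ * M), sin_le_one (ϖ * M)]⟩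
  refine (tendsto_inv_atTop_nhds_zero_nat.zero_mul_isBoundedUnder_le hbdd).congr fun M => ?_
  simp [div_eq_inv_mul]

lemma tendsto_log_natCast : Tendsto (fun M : ℕ => log M) atTop atTop :=
  tendsto_log_atTop.comp tendsto_natCast_atTop_atTop

section Zeta

variable {ϖ : ℝ}

lemma tendsto_zetaEven_div_log (hϖ : ϖ ≠ 0) :
    Tendsto (fun M : ℕ => zetaEven ϖ M / (2 / (π * ϖ) * log M)) atTop (𝓝 1) := by
  have hc : 2 / (π * ϖ) ≠ 0 := div_ne_zero two_ne_zero (mul_ne_zero pi_ne_zero hϖ)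
  have he : Tendsto (fun M : ℕ => 1 + 2 / (π * ϖ) * eulerMascheroniConstant + (1 / ϖ - 2 / π)
      + 4 / (π * ϖ) * ((1 + sin (ϖ * M)) / M)) atTop _ :=
    ((tendsto_one_add_sin_mul_div_natCast ϖ).const_mul _).const_add _
  have hw : Tendsto (fun M : ℕ => log ((M : ℝ) / 2 - 1) / log M) atTop (𝓝 1) := by
    refine ((Real.tendsto_log_mul_add_div_log one_half_pos (-1)).comp
      tendsto_natCast_atTop_atTop).congr fun M => ?_
    simp only [Function.comp_apply]
    ring_nf
  refine (tendsto_add_mul_div_mul_of_div_tendsto_one hc he tendsto_log_natCast hw).congr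
    fun M => ?_
  rw [zetaEven]
  ring

lemma tendsto_zetaOdd_div_log (hϖ : ϖ ≠ 0) :
    Tendsto (fun M : ℕ => zetaOdd ϖ M / (2 / (π * ϖ) * log M)) atTop (𝓝 1) := by
  have hc : 2 / (π * ϖ) ≠ 0 := div_ne_zero two_ne_zero (mul_ne_zero pi_ne_zero hϖ)
  have he : Tendsto (fun _ : ℕ => 1 + 2 / (π * ϖ) * eulerMascheroniConstant + (1 / ϖ - 2 / π))
      atTop _ := tendsto_const_nhds
  refine (tendsto_add_mul_div_mul_of_div_tendsto_one hc he tendsto_log_natCast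
    (tendsto_log_ceil_half_sub_one_div_log.comp tendsto_natCast_atTop_atTop)).congr fun M => ?_
  rw [zetaOdd]
  ring

lemma tendsto_zeta_mul_div_log (hϖ : ϖ ≠ 0) :
    Tendsto (fun M : ℕ => zeta ϖ M * (π * ϖ) / (2 * log M)) atTop (𝓝 1) := by
  have h := (tendsto_zetaEven_div_log hϖ).if' (p := Even) (tendsto_zetaOdd_div_log hϖ)
  refine h.congr fun M => ?_
  rw [zeta, ← ite_div]
  field_simp

end Zeta

theorem mrc_ufc_cfc_sinr_ratio_asymptotics_general (S ϖ : ℝ) (hϖ : 0 < ϖ) :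
    Tendsto
      (fun M : ℕ =>
        (((M : ℝ) - 1) / ((M : ℝ) - 2)) * (1 + zeta ϖ M * S) / (1 + S)
          * (Real.pi * ϖ) / (2 * Real.log M))
      atTop (nhds (S / (1 + S))) := by
  have hratio := tendsto_sub_one_div_sub_two.comp tendsto_natCast_atTop_atTop
  have hvanish : Tendsto (fun M : ℕ => π * ϖ / (2 * log M)) atTop (𝓝 0) :=
    tendsto_const_nhds.div_atTop (tendsto_log_natCast.const_mul_atTop two_pos)
  have h := (hratio.mul (hvanish.add ((tendsto_zeta_mul_div_log hϖ.ne').const_mul S))).div_const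
    (1 + S)
  rw [zero_add, mul_one, one_mul] at h
  refine h.congr fun M => ?_
  simp only [Function.comp_apply]
  ring

/-- for fixed `S > 0` and `ϖ > 0`, the MRC UFC/CFC SINR ratio
`RT(M) = ((M-1)/(M-2)) · (1 + ζ(M) S)/(1 + S)` satisfies
`RT(M) · (π ϖ)/(2 ln M) → S/(1 + S)` as `M → ∞`. -/
theorem mrc_ufc_cfc_sinr_ratio_asymptotics (S ϖ : ℝ) (hS : 0 < S) (hϖ : 0 < ϖ) :
    Tendsto
      (fun M : ℕ =>
        (((M : ℝ) - 1) / ((M : ℝ) - 2)) * (1 + zeta ϖ M * S) / (1 + S)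
          * (Real.pi * ϖ) / (2 * Real.log M))
      atTop (nhds (S / (1 + S))) :=
  mrc_ufc_cfc_sinr_ratio_asymptotics_general S ϖ hϖ
end

section
/- Fix a natural number K ≥ 1 and real numbers S > 0 and ϖ > 0. Define RT(M) = (1 − 2K/(M − 2)) · (1 + ζ(M)·S) for natural numbers M ≥ 3, where ζ(M) = ζ_even(M) if M is even and ζ(M) = ζ_odd(M) if M is odd. Then lim_{M→∞} RT(M) · (π ϖ)/(2 · S · ln M) = 1; that is, RT(M) is asymptotically equal to ((2 ln M)/(π ϖ)) · S. -/
open Filter Real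

/-- Auxiliary: the log argument appearing in `zeta`. -/
noncomputable def hAux (M : ℕ) : ℝ :=
  if Even M then (M : ℝ) / 2 - 1 else (⌈(M : ℝ) / 2⌉ : ℝ) - 1

lemma hAux_lower (M : ℕ) : ((M : ℝ) - 2) / 2 ≤ hAux M := by
  unfold hAux
  split_ifs
  · linarith
  · have := Int.le_ceil ((M : ℝ) / 2)
    linarith

lemma hAux_upper (M : ℕ) : hAux M ≤ (M : ℝ) / 2 := by
  unfold hAux
  split_ifs
  · linarith
  · have := Int.ceil_lt_add_one ((M : ℝ) / 2)
    linarith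

lemma zeta_eq (ϖ : ℝ) (M : ℕ) :
    zeta ϖ M = (1 + (2 / (Real.pi * ϖ)) * Real.eulerMascheroniConstant + (1 / ϖ - 2 / Real.pi))
      + (2 / (Real.pi * ϖ)) * Real.log (hAux M)
      + (if Even M then (4 / (Real.pi * ϖ)) * ((1 + Real.sin (ϖ * M)) / M) else 0) := by
  unfold zeta zetaEven zetaOdd hAux
  split_ifs <;> ring

lemma inv_log_tendsto : Tendsto (fun M : ℕ => (Real.log M)⁻¹) atTop (nhds 0) :=
  tendsto_inv_atTop_zero.comp (Real.tendsto_log_atTop.comp tendsto_natCast_atTop_atTop)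

lemma inv_nat_tendsto : Tendsto (fun M : ℕ => ((M : ℝ))⁻¹) atTop (nhds 0) :=
  tendsto_inv_atTop_zero.comp tendsto_natCast_atTop_atTop

lemma err_tendsto (ϖ : ℝ) (hϖ : 0 < ϖ) :
    Tendsto (fun M : ℕ =>
      (if Even M then (4 / (Real.pi * ϖ)) * ((1 + Real.sin (ϖ * M)) / M) else 0))
      atTop (nhds 0) := by
  have hπϖ : 0 < Real.pi * ϖ := mul_pos Real.pi_pos hϖ
  have hub : Tendsto (fun M : ℕ => (8 / (Real.pi * ϖ)) * ((M : ℝ))⁻¹) atTop (nhds 0) := by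
    simpa using inv_nat_tendsto.const_mul (8 / (Real.pi * ϖ))
  refine tendsto_of_tendsto_of_tendsto_of_le_of_le' tendsto_const_nhds hub ?_ ?_
  · filter_upwards [eventually_ge_atTop 1] with M hM
    split_ifs with h
    · have h1 : (0:ℝ) ≤ 1 + Real.sin (ϖ * M) := by
        have := Real.neg_one_le_sin (ϖ * M); linarith
      positivity
    · exact le_rfl
  · filter_upwards [eventually_ge_atTop 1] with M hM
    have hMpos : (0:ℝ) < (M : ℝ) := by exact_mod_cast hM
    split_ifs with h
    · have h2 : (1 + Real.sin (ϖ * M)) ≤ 2 := by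
        have := Real.sin_le_one (ϖ * M); linarith
      have h1 : (0:ℝ) ≤ 1 + Real.sin (ϖ * M) := by
        have := Real.neg_one_le_sin (ϖ * M); linarith
      have : (4 / (Real.pi * ϖ)) * ((1 + Real.sin (ϖ * M)) / M)
          ≤ (4 / (Real.pi * ϖ)) * (2 / M) := by
        apply mul_le_mul_of_nonneg_left _ (by positivity)
        exact div_le_div_of_nonneg_right h2 hMpos.le
      calc (4 / (Real.pi * ϖ)) * ((1 + Real.sin (ϖ * M)) / M)
          ≤ (4 / (Real.pi * ϖ)) * (2 / M) := this
        _ = (8 / (Real.pi * ϖ)) * ((M : ℝ))⁻¹ := by field_simp; ring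
    · positivity

lemma hAux_div_tendsto : Tendsto (fun M : ℕ => hAux M / M) atTop (nhds (1 / 2)) := by
  have hlb : Tendsto (fun M : ℕ => ((M : ℝ) - 2) / 2 / M) atTop (nhds (1 / 2)) := by
    have : Tendsto (fun M : ℕ => (1:ℝ) / 2 - ((M : ℝ))⁻¹) atTop (nhds (1 / 2)) := by
      simpa using tendsto_const_nhds.sub inv_nat_tendsto
    refine this.congr' ?_
    filter_upwards [eventually_ge_atTop 1] with M hM
    have hMpos : (0:ℝ) < (M : ℝ) := by exact_mod_cast hM
    field_simp
  refine tendsto_of_tendsto_of_tendsto_of_le_of_le' hlb tendsto_const_nhds ?_ ?_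
  · filter_upwards [eventually_ge_atTop 1] with M hM
    have hMpos : (0:ℝ) < (M : ℝ) := by exact_mod_cast hM
    exact div_le_div_of_nonneg_right (hAux_lower M) hMpos.le
  · filter_upwards [eventually_ge_atTop 1] with M hM
    have hMpos : (0:ℝ) < (M : ℝ) := by exact_mod_cast hM
    calc hAux M / M ≤ ((M : ℝ) / 2) / M := div_le_div_of_nonneg_right (hAux_upper M) hMpos.le
      _ = 1 / 2 := by field_simp

lemma logh_div_log_tendsto :
    Tendsto (fun M : ℕ => Real.log (hAux M) / Real.log M) atTop (nhds 1) := by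
  have hlog : Tendsto (fun M : ℕ => Real.log (hAux M / M)) atTop (nhds (Real.log (1 / 2))) :=
    (Real.continuousAt_log (by norm_num)).tendsto.comp hAux_div_tendsto
  have hmain : Tendsto (fun M : ℕ => 1 + Real.log (hAux M / M) * (Real.log M)⁻¹)
      atTop (nhds 1) := by
    have := hlog.mul inv_log_tendsto
    simpa using tendsto_const_nhds.add this
  refine hmain.congr' ?_
  filter_upwards [eventually_ge_atTop 3] with M hM
  have hMpos : (0:ℝ) < (M : ℝ) := by positivity
  have hM3 : (3:ℝ) ≤ (M : ℝ) := by exact_mod_cast hM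
  have hh : (0:ℝ) < hAux M := lt_of_lt_of_le (by linarith) (hAux_lower M)
  have hlogM : 0 < Real.log M := Real.log_pos (by linarith)
  rw [Real.log_div (ne_of_gt hh) (ne_of_gt hMpos)]
  field_simp
  ring

lemma zeta_div_log_tendsto (ϖ : ℝ) (hϖ : 0 < ϖ) :
    Tendsto (fun M : ℕ => zeta ϖ M / Real.log M) atTop (nhds (2 / (Real.pi * ϖ))) := by
  set D := (1 + (2 / (Real.pi * ϖ)) * Real.eulerMascheroniConstant + (1 / ϖ - 2 / Real.pi))
  have h1 : Tendsto (fun M : ℕ => D * (Real.log M)⁻¹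
      + (2 / (Real.pi * ϖ)) * (Real.log (hAux M) / Real.log M)
      + (if Even M then (4 / (Real.pi * ϖ)) * ((1 + Real.sin (ϖ * M)) / M) else 0)
        * (Real.log M)⁻¹) atTop (nhds (2 / (Real.pi * ϖ))) := by
    have := ((inv_log_tendsto.const_mul D).add
        ((logh_div_log_tendsto.const_mul (2 / (Real.pi * ϖ))))).add
        ((err_tendsto ϖ hϖ).mul inv_log_tendsto)
    simpa using this
  refine h1.congr ?_
  intro M
  rw [zeta_eq]
  rw [div_eq_mul_inv, div_eq_mul_inv]
  ring

/-- for fixed `K ≥ 1`, `S > 0`, `ϖ > 0`, the ZF/MRC CFC SINR ratio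
`RT(M) = (1 - 2K/(M-2)) · (1 + ζ(M) S)` satisfies
`RT(M) · (π ϖ)/(2 S ln M) → 1` as `M → ∞`; i.e. `RT(M)` is asymptotically
`((2 ln M)/(π ϖ)) · S`. -/
theorem zf_mrc_cfc_sinr_ratio_asymptotics (K : ℕ) (hK : 1 ≤ K) (S ϖ : ℝ)
    (hS : 0 < S) (hϖ : 0 < ϖ) :
    Tendsto
      (fun M : ℕ =>
        (1 - 2 * (K : ℝ) / ((M : ℝ) - 2)) * (1 + zeta ϖ M * S)
          * (Real.pi * ϖ) / (2 * S * Real.log M))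
      atTop (nhds 1) := by
  have hA : Tendsto (fun M : ℕ => 1 - 2 * (K : ℝ) / ((M : ℝ) - 2)) atTop (nhds 1) := by
    have hM2 : Tendsto (fun M : ℕ => (M : ℝ) - 2) atTop atTop :=
      tendsto_atTop_add_const_right atTop (-2) tendsto_natCast_atTop_atTop
    have := hM2.inv_tendsto_atTop.const_mul (2 * (K : ℝ))
    have h0 : Tendsto (fun M : ℕ => 2 * (K : ℝ) / ((M : ℝ) - 2)) atTop (nhds 0) := by
      simpa [div_eq_mul_inv] using this
    simpa using tendsto_const_nhds.sub h0
  have hB : Tendsto (fun M : ℕ =>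
      (Real.pi * ϖ / (2 * S)) * (Real.log M)⁻¹
      + (Real.pi * ϖ / 2) * (zeta ϖ M / Real.log M)) atTop (nhds 1) := by
    have := (inv_log_tendsto.const_mul (Real.pi * ϖ / (2 * S))).add
      ((zeta_div_log_tendsto ϖ hϖ).const_mul (Real.pi * ϖ / 2))
    have heq : (Real.pi * ϖ / (2 * S)) * 0 + (Real.pi * ϖ / 2) * (2 / (Real.pi * ϖ)) = 1 := by
      have hπ : Real.pi ≠ 0 := Real.pi_ne_zero
      field_simp
      ring
    rw [heq] at this
    exact this
  have := hA.mul hB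
  rw [mul_one] at this
  refine this.congr ?_
  intro M
  have hS' : S ≠ 0 := ne_of_gt hS
  have hkey : S * S⁻¹ = 1 := mul_inv_cancel₀ hS'
  linear_combination (-((1 - 2 * (K : ℝ) / ((M : ℝ) - 2)) * zeta ϖ M * (Real.pi * ϖ) * (Real.log M)⁻¹ / 2)) * hkey
end

section
/- Fix a natural number K ≥ 1 and real numbers a > 0, β > 0, T ≥ 0 and ϖ > 0, and set S(M) = a/M for natural numbers M ≥ 1. Then, as M → ∞ over the natural numbers, each of the four expressions (i) log₂(1 + (M − 1)·S(M)/(1 + (S(M)/β)·T)), (ii) log₂(1 + (M − 2)·S(M)/(1 + ζ(M)·(S(M)/β)·T)), (iii) log₂(1 + (M − K)·S(M)), and (iv) log₂(1 + (M − 2K − 2)·S(M)) converges to log₂(1 + a), where ζ(M) = ζ_even(M) if M is even and ζ(M) = ζ_odd(M) if M is odd. -/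
open Filter Real

lemma numLim (a c : ℝ) :
    Tendsto (fun M : ℕ => ((M : ℝ) - c) * (a / M)) atTop (nhds a) := by
  have h0 : Tendsto (fun M : ℕ => a - c * a * (1 / (M : ℝ))) atTop (nhds a) := by
    have := (tendsto_const_nhds (x := a) (f := atTop (α := ℕ))).sub
      ((tendsto_const_nhds (x := c * a)).mul tendsto_one_div_atTop_nhds_zero_nat)
    simpa using this
  refine h0.congr' ?_
  filter_upwards [eventually_ge_atTop 1] with M hM
  have hM' : (M : ℝ) ≠ 0 := by positivity
  field_simp

lemma logDivLim : Tendsto (fun M : ℕ => Real.log M / M) atTop (nhds 0) := by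
  have h := Real.isLittleO_log_id_atTop.tendsto_div_nhds_zero
  exact h.comp tendsto_natCast_atTop_atTop

lemma zetaDivLim (ϖ : ℝ) (hϖ : 0 < ϖ) :
    Tendsto (fun M : ℕ => zeta ϖ M / M) atTop (nhds 0) := by
  set C : ℝ := 1 + (2 / (Real.pi * ϖ)) * |Real.eulerMascheroniConstant|
      + |1 / ϖ - 2 / Real.pi| + 8 / (Real.pi * ϖ) with hC
  set D : ℝ := 2 / (Real.pi * ϖ) with hD
  have hDpos : 0 < D := by
    have := Real.pi_pos; positivity
  have hg : Tendsto (fun M : ℕ => C * (1 / (M : ℝ)) + D * (Real.log M / M))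
      atTop (nhds 0) := by
    have := ((tendsto_const_nhds (x := C)).mul tendsto_one_div_atTop_nhds_zero_nat).add
      ((tendsto_const_nhds (x := D)).mul logDivLim)
    simpa using this
  refine squeeze_zero_norm' ?_ hg
  filter_upwards [eventually_ge_atTop 4] with M hM
  have hM4 : (4 : ℝ) ≤ M := by exact_mod_cast hM
  have hMpos : (0 : ℝ) < M := by linarith
  have hzb : |zeta ϖ M| ≤ C + D * Real.log M := by
    have hpi := Real.pi_pos
    rcases Nat.even_or_odd M with he | ho
    · -- even case
      have hx1 : (1 : ℝ) ≤ (M : ℝ) / 2 - 1 := by linarith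
      have hxM : (M : ℝ) / 2 - 1 ≤ M := by linarith
      have hlog0 : 0 ≤ Real.log ((M : ℝ) / 2 - 1) := Real.log_nonneg hx1
      have hlogM : Real.log ((M : ℝ) / 2 - 1) ≤ Real.log M :=
        Real.log_le_log (by linarith) hxM
      have hsin : |(1 + Real.sin (ϖ * M)) / (M : ℝ)| ≤ 2 := by
        rw [abs_div, abs_of_pos hMpos, div_le_iff₀ hMpos]
        have := Real.neg_one_le_sin (ϖ * M)
        have := Real.sin_le_one (ϖ * M)
        rw [abs_le]
        constructor <;> nlinarith
      simp only [zeta, if_pos he, zetaEven]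
      calc |1 + D * (Real.eulerMascheroniConstant + Real.log ((M : ℝ) / 2 - 1))
            + (1 / ϖ - 2 / Real.pi) + (4 / (Real.pi * ϖ)) * ((1 + Real.sin (ϖ * M)) / M)|
          ≤ |1| + D * |Real.eulerMascheroniConstant + Real.log ((M : ℝ) / 2 - 1)|
            + |1 / ϖ - 2 / Real.pi| + (4 / (Real.pi * ϖ)) * |(1 + Real.sin (ϖ * M)) / (M : ℝ)| := by
            have h1 := abs_add_le (1 + D * (Real.eulerMascheroniConstant + Real.log ((M : ℝ) / 2 - 1))
              + (1 / ϖ - 2 / Real.pi)) ((4 / (Real.pi * ϖ)) * ((1 + Real.sin (ϖ * M)) / M))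
            have h2 := abs_add_le (1 + D * (Real.eulerMascheroniConstant + Real.log ((M : ℝ) / 2 - 1)))
              (1 / ϖ - 2 / Real.pi)
            have h3 := abs_add_le (1 : ℝ) (D * (Real.eulerMascheroniConstant + Real.log ((M : ℝ) / 2 - 1)))
            rw [abs_mul, abs_of_pos hDpos] at h3
            have h4 : |(4 / (Real.pi * ϖ))| = 4 / (Real.pi * ϖ) := abs_of_pos (by positivity)
            rw [abs_mul, h4] at h1
            linarith
        _ ≤ C + D * Real.log M := by
            have h5 : |Real.eulerMascheroniConstant + Real.log ((M : ℝ) / 2 - 1)|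
                ≤ |Real.eulerMascheroniConstant| + Real.log M := by
              calc _ ≤ |Real.eulerMascheroniConstant| + |Real.log ((M : ℝ) / 2 - 1)| := abs_add_le _ _
                _ ≤ _ := by rw [abs_of_nonneg hlog0]; linarith
            have h6 : (4 / (Real.pi * ϖ)) * |(1 + Real.sin (ϖ * M)) / (M : ℝ)|
                ≤ 8 / (Real.pi * ϖ) := by
              have h7 : (0:ℝ) < 4 / (Real.pi * ϖ) := by positivity
              have h8 : 4 / (Real.pi * ϖ) * 2 = 8 / (Real.pi * ϖ) := by ring
              nlinarith [mul_le_mul_of_nonneg_left hsin h7.le]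
            have := mul_le_mul_of_nonneg_left h5 hDpos.le
            simp only [hC, abs_one]
            nlinarith
    · -- odd case
      have hceil_le : ((⌈(M : ℝ) / 2⌉ : ℤ) : ℝ) ≤ M := by
        exact_mod_cast Int.ceil_le.mpr (by push_cast; linarith)
      have hceil_ge : (2 : ℝ) ≤ ((⌈(M : ℝ) / 2⌉ : ℤ) : ℝ) := by
        have := Int.le_ceil ((M : ℝ) / 2)
        linarith
      set x : ℝ := ((⌈(M : ℝ) / 2⌉ : ℤ) : ℝ) - 1 with hx
      have hx1 : (1 : ℝ) ≤ x := by simp [hx]; linarith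
      have hxM : x ≤ M := by simp [hx]; linarith
      have hlog0 : 0 ≤ Real.log x := Real.log_nonneg hx1
      have hlogM : Real.log x ≤ Real.log M := Real.log_le_log (by linarith) hxM
      have he' : ¬ Even M := Nat.not_even_iff_odd.mpr ho
      simp only [zeta, if_neg he', zetaOdd]
      calc |1 + D * (Real.eulerMascheroniConstant + Real.log x) + (1 / ϖ - 2 / Real.pi)|
          ≤ |1| + D * |Real.eulerMascheroniConstant + Real.log x| + |1 / ϖ - 2 / Real.pi| := by
            have h2 := abs_add_le (1 + D * (Real.eulerMascheroniConstant + Real.log x))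
              (1 / ϖ - 2 / Real.pi)
            have h3 := abs_add_le (1 : ℝ) (D * (Real.eulerMascheroniConstant + Real.log x))
            rw [abs_mul, abs_of_pos hDpos] at h3
            exact le_trans h2 (add_le_add_left h3 _)
        _ ≤ C + D * Real.log M := by
            have h5 : |Real.eulerMascheroniConstant + Real.log x|
                ≤ |Real.eulerMascheroniConstant| + Real.log M := by
              calc _ ≤ |Real.eulerMascheroniConstant| + |Real.log x| := abs_add_le _ _
                _ ≤ _ := by rw [abs_of_nonneg hlog0]; linarith
            have := mul_le_mul_of_nonneg_left h5 hDpos.le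
            have h8 : (0:ℝ) ≤ 8 / (Real.pi * ϖ) := by positivity
            simp only [hC, abs_one]
            nlinarith
  have hnorm : ‖zeta ϖ M / M‖ = |zeta ϖ M| / M := by
    rw [Real.norm_eq_abs, abs_div, abs_of_pos hMpos]
  rw [hnorm]
  calc |zeta ϖ M| / M ≤ (C + D * Real.log M) / M := by
        exact (div_le_div_iff_of_pos_right hMpos).mpr hzb
    _ = C * (1 / M) + D * (Real.log M / M) := by ring

lemma logComp (a : ℝ) (ha : 0 < a) {x y : ℕ → ℝ}
    (hx : Tendsto x atTop (nhds a)) (hy : Tendsto y atTop (nhds 0)) :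
    Tendsto (fun M => Real.logb 2 (1 + x M / (1 + y M))) atTop
      (nhds (Real.logb 2 (1 + a))) := by
  have hinner : Tendsto (fun M => 1 + x M / (1 + y M)) atTop (nhds (1 + a)) := by
    have hd : Tendsto (fun M => 1 + y M) atTop (nhds 1) := by
      simpa using (tendsto_const_nhds (x := (1:ℝ))).add hy
    have := hx.div hd one_ne_zero
    simpa using (tendsto_const_nhds (x := (1:ℝ))).add this
  have hcont : ContinuousAt (Real.logb 2) (1 + a) := by
    apply Real.continuousAt_logb
    positivity
  exact hcont.tendsto.comp hinner

/-- Remark 2, power scaling law: for fixed `K ≥ 1`, `a > 0`,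
`β > 0`, `T ≥ 0`, `ϖ > 0`, with per-sensor SNR `S(M) = a/M`, each of the four
asymptotic EARs (MRC in UFC, MRC in CFC, ZF in UFC, ZF in CFC) tends to
`log₂(1 + a)` as `M → ∞`. -/
theorem power_scaling_law (K : ℕ) (hK : 1 ≤ K) (a β T ϖ : ℝ)
    (ha : 0 < a) (hβ : 0 < β) (hT : 0 ≤ T) (hϖ : 0 < ϖ) :
    Tendsto
      (fun M : ℕ =>
        Real.logb 2 (1 + ((M : ℝ) - 1) * (a / M) / (1 + (a / M / β) * T)))
      atTop (nhds (Real.logb 2 (1 + a))) ∧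
    Tendsto
      (fun M : ℕ =>
        Real.logb 2 (1 + ((M : ℝ) - 2) * (a / M) / (1 + zeta ϖ M * (a / M / β) * T)))
      atTop (nhds (Real.logb 2 (1 + a))) ∧
    Tendsto
      (fun M : ℕ =>
        Real.logb 2 (1 + ((M : ℝ) - K) * (a / M)))
      atTop (nhds (Real.logb 2 (1 + a))) ∧
    Tendsto
      (fun M : ℕ =>
        Real.logb 2 (1 + ((M : ℝ) - 2 * K - 2) * (a / M)))
      atTop (nhds (Real.logb 2 (1 + a))) := by
  have hy1 : Tendsto (fun M : ℕ => (a / M / β) * T) atTop (nhds 0) := by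
    have := (tendsto_const_nhds (x := a * T / β)).mul
      (tendsto_one_div_atTop_nhds_zero_nat)
    rw [mul_zero] at this
    refine this.congr fun M => by ring
  have hy2 : Tendsto (fun M : ℕ => zeta ϖ M * (a / M / β) * T) atTop (nhds 0) := by
    have := (zetaDivLim ϖ hϖ).mul (tendsto_const_nhds (x := a * T / β))
    rw [zero_mul] at this
    refine this.congr fun M => by ring
  refine ⟨logComp a ha (numLim a 1) hy1, logComp a ha (numLim a 2) hy2, ?_, ?_⟩
  · simpa using logComp a ha (numLim a K) (tendsto_const_nhds (x := (0:ℝ)))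
  · have := logComp a ha (numLim a (2 * K + 2)) (tendsto_const_nhds (x := (0:ℝ)))
    simp only [add_zero, div_one] at this
    refine this.congr fun M => by push_cast; ring_nf
end
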